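/- Let D ⊆ F_2^n be a triply even binary linear code whose length n is divisible by 16 and which contains the all-one vector (1,1,…,1). Then the code C = D^⊥ satisfies: (i) C is even; (ii) every codeword of C^⊥ = D has weight divisible by 8 and C^⊥ ⊆ C; and (iii) for every α ∈ C^⊥, there exists a doubly even subcode E of C_α = {γ ∈ C : supp(γ) ⊆ supp(α)} which is self-dual with respect to α. In other words, C = D^⊥ is F-admissible. -/

import Mathlib

/-- The weight of a binary vector: the number of nonzero coordinates. -/
def wt {n : ℕ} (α : Fin n → ZMod 2) : ℕ :=
  (Finset.univ.filter (fun i => α i ≠ 0)).card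

/-- The standard bilinear form `⟨α,β⟩ = ∑ i, α i * β i` on `F_2^n`. -/
def ip {n : ℕ} (α β : Fin n → ZMod 2) : ZMod 2 := ∑ i, α i * β i

/-- The support of a binary vector. -/
def supp {n : ℕ} (α : Fin n → ZMod 2) : Set (Fin n) := {i | α i ≠ 0}

/-- The dual code of a set of vectors. -/
def dualCode {n : ℕ} (S : Set (Fin n → ZMod 2)) : Set (Fin n → ZMod 2) :=
  {δ | ∀ γ ∈ S, ip δ γ = 0}

/-- The support of a code: the union of the supports of its codewords. -/
def codeSupp {n : ℕ} (S : Set (Fin n → ZMod 2)) : Set (Fin n) := ⋃ h ∈ S, supp h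

/-- `H^{⊥_β}`: vectors with support inside `supp β` orthogonal to every element of `H`. -/
def perpWrt {n : ℕ} (β : Fin n → ZMod 2) (H : Set (Fin n → ZMod 2)) :
    Set (Fin n → ZMod 2) :=
  {δ | supp δ ⊆ supp β ∧ ∀ h ∈ H, ip δ h = 0}

/-- `H` is self-dual with respect to `β` if `supp H = supp β` and `H^{⊥_β} = H`. -/
def selfDualWrt {n : ℕ} (β : Fin n → ZMod 2) (H : Set (Fin n → ZMod 2)) : Prop :=
  codeSupp H = supp β ∧ perpWrt β H = H


/-!
Since `D` is triply even, `D ⊆ D^⊥` and `C^⊥ = D`; the all-one vector makes `C` even. For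
`α ∈ D` the products `α * y` (`y ∈ D`) have weight `|supp α ∩ supp y| ≡ 0 (mod 4)`, so they span a
doubly even code `B` supported on `supp α`, and any code `E ⊇ B` supported on `supp α` with
`E ⊆ E^{⊥_α}` is orthogonal to all of `D`, i.e. lies in `C_α`.

It remains to enlarge `B` to a code self-dual with respect to `α`; take `E ⊇ B` maximal among
doubly even codes supported on `supp α`. Counting with the character `x ↦ i^{wt x}`,
`|E| · ∑_{x ∈ E^{⊥_α}} i^{wt x} = ∑_{y ∈ E} ∏_{j ∈ supp α} (1 + i (-1)^{y_j}) = |E| (1 + i)^{wt α}`,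
and `(1 + i)^{wt α} = 16^{wt α / 8}` because `8 ∣ wt α`. If `E^{⊥_α} ≠ E`, maximality forces every
`x ∈ E^{⊥_α} \ E` to have weight `≡ 2 (mod 4)`, so the sum equals `|E| - |E^{⊥_α} \ E| ≥ 1`,
contradicting `|E| ∣ |E^{⊥_α}|`.
-/

open Finset Complex
open scoped Classical

namespace BinaryCode

variable {n : ℕ}

lemma eq_zero_or_eq_one (a : ZMod 2) : a = 0 ∨ a = 1 := by
  revert a; decide

lemma eq_one_of_ne_zero {a : ZMod 2} (h : a ≠ 0) : a = 1 :=
  (eq_zero_or_eq_one a).resolve_left h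

lemma ip_comm (x y : Fin n → ZMod 2) : ip x y = ip y x := dotProduct_comm x y

lemma ip_add_left (x y z : Fin n → ZMod 2) : ip (x + y) z = ip x z + ip y z :=
  add_dotProduct x y z

lemma ip_add_right (x y z : Fin n → ZMod 2) : ip x (y + z) = ip x y + ip x z :=
  dotProduct_add x y z

lemma ip_smul_left (c : ZMod 2) (x y : Fin n → ZMod 2) : ip (c • x) y = c * ip x y :=
  smul_dotProduct c x y

lemma wt_eq_sum_val (x : Fin n → ZMod 2) : wt x = ∑ i, (x i).val := by
  rw [wt, card_filter]
  refine sum_congr rfl fun i _ => ?_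
  generalize x i = a
  revert a; decide

lemma natCast_wt (x : Fin n → ZMod 2) : (wt x : ZMod 2) = ∑ i, x i := by
  simp [wt_eq_sum_val]

lemma ip_eq_natCast_wt_mul (x y : Fin n → ZMod 2) : ip x y = (wt (x * y) : ZMod 2) := by
  rw [natCast_wt]; rfl

lemma ip_eq_zero_iff_two_dvd {x y : Fin n → ZMod 2} : ip x y = 0 ↔ 2 ∣ wt (x * y) := by
  rw [ip_eq_natCast_wt_mul, ZMod.natCast_eq_zero_iff]

lemma wt_add_add_two_mul_wt_mul (x y : Fin n → ZMod 2) :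
    wt (x + y) + 2 * wt (x * y) = wt x + wt y := by
  simp only [wt_eq_sum_val, mul_sum, ← sum_add_distrib, Pi.add_apply, Pi.mul_apply]
  refine sum_congr rfl fun i _ => ?_
  generalize x i = a; generalize y i = b
  revert a b; decide

section DoublyEven

variable {x y : Fin n → ZMod 2}

lemma four_dvd_wt_add (hx : 4 ∣ wt x) (hy : 4 ∣ wt y) (h : ip x y = 0) : 4 ∣ wt (x + y) := by
  have := wt_add_add_two_mul_wt_mul x y
  have := ip_eq_zero_iff_two_dvd.mp h
  omega

lemma ip_eq_zero_of_four_dvd (hx : 4 ∣ wt x) (hy : 4 ∣ wt y) (hxy : 4 ∣ wt (x + y)) :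
    ip x y = 0 := by
  have := wt_add_add_two_mul_wt_mul x y
  rw [ip_eq_zero_iff_two_dvd]
  omega

lemma four_dvd_wt_mul_of_eight_dvd (hx : 8 ∣ wt x) (hy : 8 ∣ wt y) (hxy : 8 ∣ wt (x + y)) :
    4 ∣ wt (x * y) := by
  have := wt_add_add_two_mul_wt_mul x y
  omega

end DoublyEven

section Support

variable {α x : Fin n → ZMod 2}

lemma mul_eq_right_of_supp_subset (h : supp x ⊆ supp α) : α * x = x := by
  funext i
  by_cases hx : x i = 0
  · simp [hx]
  · simp [eq_one_of_ne_zero (h hx)]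

lemma supp_mul_subset_left (α x : Fin n → ZMod 2) : supp (α * x) ⊆ supp α :=
  fun i hi hα => hi (by simp [hα])

lemma ip_mul_right_of_supp_subset (h : supp x ⊆ supp α) (y : Fin n → ZMod 2) :
    ip x (α * y) = ip x y := by
  conv_rhs => rw [← mul_eq_right_of_supp_subset h]
  exact sum_congr rfl fun i _ => by simp only [Pi.mul_apply]; ring

lemma ip_eq_natCast_wt_of_supp_subset (h : supp x ⊆ supp α) : ip x α = wt x := by
  rw [ip_eq_natCast_wt_mul, mul_comm, mul_eq_right_of_supp_subset h]

end Support

lemma two_dvd_wt_of_mem_dualCode {S : Set (Fin n → ZMod 2)} (hS : 1 ∈ S)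
    {γ : Fin n → ZMod 2} (hγ : γ ∈ dualCode S) : 2 ∣ wt γ := by
  rw [← ZMod.natCast_eq_zero_iff, ← ip_eq_natCast_wt_of_supp_subset (α := 1) fun _ _ => one_ne_zero]
  exact hγ 1 hS

lemma subset_dualCode_of_four_dvd {D : Submodule (ZMod 2) (Fin n → ZMod 2)}
    (hD : ∀ x ∈ D, 4 ∣ wt x) : (D : Set (Fin n → ZMod 2)) ⊆ dualCode D :=
  fun x hx y hy => ip_eq_zero_of_four_dvd (hD x hx) (hD y hy) (hD _ (D.add_mem hx hy))

lemma dualCode_dualCode_subset (D : Submodule (ZMod 2) (Fin n → ZMod 2)) :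
    dualCode (dualCode (D : Set (Fin n → ZMod 2))) ⊆ D := by
  intro γ hγ
  rw [SetLike.mem_coe, ← Subspace.forall_mem_dualAnnihilator_apply_eq_zero_iff]
  intro φ hφ
  obtain ⟨x, rfl⟩ := (dotProductEquiv (ZMod 2) (Fin n)).surjective φ
  have hx : x ∈ dualCode (D : Set (Fin n → ZMod 2)) := fun δ hδ =>
    (Submodule.mem_dualAnnihilator _).mp hφ δ hδ
  change ip x γ = 0
  rw [ip_comm]
  exact hγ x hx

def supportedIn (α : Fin n → ZMod 2) : Submodule (ZMod 2) (Fin n → ZMod 2) :=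
  Submodule.pi {i | α i = 0} fun _ => ⊥

lemma mem_supportedIn {α x : Fin n → ZMod 2} : x ∈ supportedIn α ↔ supp x ⊆ supp α := by
  simp only [supportedIn, Submodule.mem_pi, Submodule.mem_bot, Set.subset_def]
  exact forall_congr' fun i => not_imp_not.symm

def dualSubmodule (S : Set (Fin n → ZMod 2)) : Submodule (ZMod 2) (Fin n → ZMod 2) where
  carrier := dualCode S
  zero_mem' _ _ := zero_dotProduct _
  add_mem' {x y} hx hy γ hγ := by
    rw [ip_add_left, hx γ hγ, hy γ hγ, add_zero]
  smul_mem' c x hx γ hγ := by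
    rw [ip_smul_left, hx γ hγ, mul_zero]

lemma mem_dualSubmodule {S : Set (Fin n → ZMod 2)} {x : Fin n → ZMod 2} :
    x ∈ dualSubmodule S ↔ x ∈ dualCode S := Iff.rfl

def perp (α : Fin n → ZMod 2) (B : Submodule (ZMod 2) (Fin n → ZMod 2)) :
    Submodule (ZMod 2) (Fin n → ZMod 2) :=
  supportedIn α ⊓ dualSubmodule B

lemma coe_perp (α : Fin n → ZMod 2) (B : Submodule (ZMod 2) (Fin n → ZMod 2)) :
    (perp α B : Set (Fin n → ZMod 2)) = perpWrt α B := by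
  ext x
  simp only [perp, Submodule.coe_inf, Set.mem_inter_iff, SetLike.mem_coe, mem_supportedIn]
  rfl

lemma le_perp {α : Fin n → ZMod 2} {B : Submodule (ZMod 2) (Fin n → ZMod 2)}
    (hsupp : B ≤ supportedIn α) (hde : ∀ x ∈ B, 4 ∣ wt x) : B ≤ perp α B :=
  fun x hx => ⟨hsupp hx, fun y hy =>
    ip_eq_zero_of_four_dvd (hde x hx) (hde y hy) (hde _ (B.add_mem hx hy))⟩

noncomputable def codewords (B : Submodule (ZMod 2) (Fin n → ZMod 2)) : Finset (Fin n → ZMod 2) :=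
  univ.filter (· ∈ B)

lemma mem_codewords {B : Submodule (ZMod 2) (Fin n → ZMod 2)} {x : Fin n → ZMod 2} :
    x ∈ codewords B ↔ x ∈ B := by
  simp [codewords]

lemma card_codewords (B : Submodule (ZMod 2) (Fin n → ZMod 2)) :
    #(codewords B) = Nat.card B := by
  rw [Nat.card_eq_fintype_card, Fintype.card_subtype]; rfl

def signChar (t : ZMod 2) : ℂ := if t = 0 then 1 else -1

lemma signChar_one : signChar 1 = -1 := by simp [signChar]

lemma signChar_add (a b : ZMod 2) : signChar (a + b) = signChar a * signChar b := by
  have h : ∀ a b : ZMod 2, a + b = 0 ↔ (a = 0 ↔ b = 0) := by decide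
  simp only [signChar, h]
  split_ifs <;> simp_all

lemma signChar_sum {ι : Type*} (s : Finset ι) (f : ι → ZMod 2) :
    signChar (∑ i ∈ s, f i) = ∏ i ∈ s, signChar (f i) := by
  induction s using Finset.cons_induction with
  | empty => simp [signChar]
  | cons a s ha ih => rw [sum_cons, prod_cons, signChar_add, ih]

lemma sum_signChar_ip (B : Submodule (ZMod 2) (Fin n → ZMod 2)) (x : Fin n → ZMod 2) :
    ∑ y ∈ codewords B, signChar (ip x y) =
      if x ∈ dualCode B then (#(codewords B) : ℂ) else 0 := by
  split_ifs with hx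
  · rw [sum_congr rfl fun y hy => by rw [hx y (mem_codewords.mp hy)]]
    simp [signChar]
  · obtain ⟨y₀, hy₀, hne⟩ : ∃ y₀ ∈ B, ip x y₀ ≠ 0 := by simpa [dualCode] using hx
    rw [← self_eq_neg]
    calc ∑ y ∈ codewords B, signChar (ip x y)
        = ∑ y ∈ codewords B, signChar (ip x (y + y₀)) :=
          (sum_equiv (Equiv.addRight y₀) (fun y => by simp [mem_codewords, B.add_mem_iff_left hy₀])
            fun _ _ => rfl).symm
      _ = -∑ y ∈ codewords B, signChar (ip x y) := by
          simp only [ip_add_right, signChar_add, eq_one_of_ne_zero hne, signChar_one, mul_neg_one,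
            sum_neg_distrib]

lemma sum_supportedIn_I_pow_wt_mul_signChar (α y : Fin n → ZMod 2) :
    ∑ x ∈ codewords (supportedIn α), I ^ wt x * signChar (ip x y) =
      ∏ j with α j ≠ 0, (1 + I * signChar (y j)) := by
  -- `f j t` vanishes for `t ≠ 0` off `supp α`, so `∏ j, f j (x j)` is the summand cut down to
  -- vectors supported in `α`; then expand the product of sums.
  set f : Fin n → ZMod 2 → ℂ :=
    fun j t => if t = 0 ∨ α j ≠ 0 then I ^ t.val * signChar (t * y j) else 0
  have hterm (x : Fin n → ZMod 2) :
      ∏ j, f j (x j) = if x ∈ supportedIn α then I ^ wt x * signChar (ip x y) else 0 := by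
    split_ifs with hx
    · have hx' : ∀ j, x j = 0 ∨ α j ≠ 0 := fun j => or_iff_not_imp_left.mpr
        fun h => mem_supportedIn.mp hx h
      simp only [f, hx', if_true, prod_mul_distrib, prod_pow_eq_pow_sum, ← wt_eq_sum_val,
        ip, signChar_sum]
    · obtain ⟨j, hxj, hαj⟩ : ∃ j, x j ≠ 0 ∧ α j = 0 := by
        simpa [mem_supportedIn, Set.not_subset, supp] using hx
      exact prod_eq_zero (mem_univ j) (by simp [f, hxj, hαj])
  have hfactor (j : Fin n) : ∑ t, f j t = if α j ≠ 0 then 1 + I * signChar (y j) else 1 := by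
    rw [show ∑ t, f j t = f j 0 + f j 1 from Fin.sum_univ_two _]
    by_cases hαj : α j = 0 <;> simp [f, hαj, signChar, ZMod.val_one]
  calc ∑ x ∈ codewords (supportedIn α), I ^ wt x * signChar (ip x y)
      = ∑ x : Fin n → ZMod 2, ∏ j, f j (x j) := by
        rw [codewords, sum_filter]; exact sum_congr rfl fun x _ => (hterm x).symm
    _ = ∏ j, ∑ t, f j t := by rw [Fintype.prod_sum]
    _ = ∏ j with α j ≠ 0, (1 + I * signChar (y j)) := by simp only [hfactor, prod_filter]

lemma prod_one_add_I_mul_signChar {α y : Fin n → ZMod 2} (h : 4 ∣ wt (α * y)) :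
    ∏ j with α j ≠ 0, (1 + I * signChar (y j)) = (1 + I) ^ wt α := by
  set S := univ.filter fun j => α j ≠ 0
  have hcard : #(S.filter fun j => ¬y j = 0) = wt (α * y) := by
    simp only [S, filter_filter, wt, Pi.mul_apply, mul_ne_zero_iff]
  have hconj : (1 - I) ^ wt (α * y) = (1 + I) ^ wt (α * y) := by
    obtain ⟨k, hk⟩ := h
    have h4 : (1 - I) ^ 4 = (1 + I) ^ 4 := by linear_combination (-8 * I) * I_sq
    rw [hk, pow_mul, pow_mul, h4]
  have h0 : ∀ j ∈ S.filter fun j => y j = 0, 1 + I * signChar (y j) = 1 + I := fun j hj => by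
    simp [(mem_filter.mp hj).2, signChar]
  have h1 : ∀ j ∈ S.filter fun j => ¬y j = 0, 1 + I * signChar (y j) = 1 - I := fun j hj => by
    simp [(mem_filter.mp hj).2, signChar, sub_eq_add_neg]
  rw [← prod_filter_mul_prod_filter_not S (fun j => y j = 0), prod_congr rfl h0,
    prod_congr rfl h1, prod_const, prod_const, hcard, hconj, ← pow_add, ← hcard,
    card_filter_add_card_filter_not]
  rfl

lemma sum_perp_I_pow_wt (α : Fin n → ZMod 2) (B : Submodule (ZMod 2) (Fin n → ZMod 2))
    (hB : ∀ y ∈ B, 4 ∣ wt (α * y)) :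
    ∑ x ∈ codewords (perp α B), I ^ wt x = (1 + I) ^ wt α := by
  have hB₀ : (#(codewords B) : ℂ) ≠ 0 :=
    Nat.cast_ne_zero.mpr (card_ne_zero_of_mem (mem_codewords.mpr B.zero_mem))
  have hperp : codewords (perp α B) = (codewords (supportedIn α)).filter (· ∈ dualCode B) := by
    ext x; simp [mem_codewords, perp, mem_dualSubmodule]
  apply mul_left_cancel₀ hB₀
  calc #(codewords B) * ∑ x ∈ codewords (perp α B), I ^ wt x
      = ∑ x ∈ codewords (supportedIn α), I ^ wt x * ∑ y ∈ codewords B, signChar (ip x y) := by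
        simp only [sum_signChar_ip, mul_ite, mul_zero, ← sum_filter, ← hperp, mul_sum, mul_comm]
    _ = ∑ y ∈ codewords B, ∑ x ∈ codewords (supportedIn α), I ^ wt x * signChar (ip x y) := by
        simp only [mul_sum]; exact sum_comm
    _ = ∑ y ∈ codewords B, (1 + I) ^ wt α := sum_congr rfl fun y hy => by
        rw [sum_supportedIn_I_pow_wt_mul_signChar,
          prod_one_add_I_mul_signChar (hB y (mem_codewords.mp hy))]
    _ = #(codewords B) * (1 + I) ^ wt α := by rw [sum_const, nsmul_eq_mul]

lemma one_add_I_pow_eight : (1 + I) ^ 8 = 16 := by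
  have h2 : (1 + I) ^ 2 = 2 * I := by linear_combination I_sq
  rw [show 8 = 2 * 4 from rfl, pow_mul, h2, mul_pow, I_pow_four]
  norm_num

lemma I_pow_eq_neg_one {m : ℕ} (h2 : 2 ∣ m) (h4 : ¬4 ∣ m) : I ^ m = -1 := by
  rw [I_pow_eq_pow_mod, show m % 4 = 2 by omega, I_sq]

lemma exists_four_dvd_wt_mem_perp_of_ne {α : Fin n → ZMod 2}
    {B : Submodule (ZMod 2) (Fin n → ZMod 2)} (hα : α ∈ B) (hsupp : B ≤ supportedIn α)
    (hde : ∀ x ∈ B, 4 ∣ wt x) (h8 : 8 ∣ wt α) (hne : perp α B ≠ B) :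
    ∃ x ∈ perp α B, x ∉ B ∧ 4 ∣ wt x := by
  by_contra! hcon
  have hle := le_perp hsupp hde
  set P := codewords (perp α B)
  set b := #(codewords B)
  set d := #(P \ codewords B)
  have hsub : codewords B ⊆ P := fun x hx => mem_codewords.mpr (hle (mem_codewords.mp hx))
  have hd : d ≠ 0 := by
    obtain ⟨x₀, hx₀, hx₀B⟩ := SetLike.exists_of_lt (lt_of_le_of_ne hle hne.symm)
    exact card_ne_zero_of_mem (mem_sdiff.mpr ⟨mem_codewords.mpr hx₀, mt mem_codewords.mp hx₀B⟩)
  have hdvd : b ∣ b + d := by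
    have : Nat.card B ∣ Nat.card (perp α B) :=
      AddSubgroup.card_dvd_of_le (Submodule.toAddSubgroup_mono hle)
    rwa [← card_codewords, ← card_codewords, ← card_sdiff_add_card_eq_card hsub, add_comm] at this
  have hB : ∀ x ∈ codewords B, I ^ wt x = 1 := fun x hx => by
    obtain ⟨k, hk⟩ := hde x (mem_codewords.mp hx)
    rw [hk, pow_mul, I_pow_four, one_pow]
  have hP : ∀ x ∈ P \ codewords B, I ^ wt x = -1 := fun x hx => by
    obtain ⟨hxP, hxB⟩ := mem_sdiff.mp hx
    obtain ⟨hxα, hxdual⟩ := mem_codewords.mp hxP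
    have h2 : 2 ∣ wt x := by
      rw [← ZMod.natCast_eq_zero_iff, ← ip_eq_natCast_wt_of_supp_subset (mem_supportedIn.mp hxα)]
      exact hxdual α hα
    exact I_pow_eq_neg_one h2 (hcon x (mem_codewords.mp hxP) (mt mem_codewords.mpr hxB))
  have hbd : (b : ℂ) - d = 16 ^ (wt α / 8) :=
    calc (b : ℂ) - d = ∑ x ∈ P, I ^ wt x := by
          rw [← sum_sdiff hsub, sum_congr rfl hP, sum_congr rfl hB, sum_const, sum_const,
            nsmul_eq_mul, nsmul_eq_mul]
          ring
      _ = (1 + I) ^ wt α := sum_perp_I_pow_wt α B fun y hy => by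
          rw [mul_eq_right_of_supp_subset (mem_supportedIn.mp (hsupp hy))]; exact hde y hy
      _ = 16 ^ (wt α / 8) := by
          rw [← Nat.mul_div_cancel' h8, pow_mul, one_add_I_pow_eight,
            Nat.mul_div_cancel_left _ (by norm_num)]
  have hlt : d < b := by
    have : (b : ℤ) - d = 16 ^ (wt α / 8) := by exact_mod_cast hbd
    have : (1 : ℤ) ≤ 16 ^ (wt α / 8) := one_le_pow₀ (by norm_num)
    omega
  exact hd (Nat.eq_zero_of_dvd_of_lt ((Nat.dvd_add_right dvd_rfl).mp hdvd) hlt)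

lemma four_dvd_wt_of_mem_sup_span {E : Submodule (ZMod 2) (Fin n → ZMod 2)}
    {x : Fin n → ZMod 2} (hE : ∀ y ∈ E, 4 ∣ wt y) (hx : 4 ∣ wt x) (hxE : ∀ y ∈ E, ip x y = 0) :
    ∀ z ∈ E ⊔ Submodule.span (ZMod 2) {x}, 4 ∣ wt z := by
  intro z hz
  obtain ⟨y, hy, s, hs, rfl⟩ := Submodule.mem_sup.mp hz
  obtain ⟨c, rfl⟩ := Submodule.mem_span_singleton.mp hs
  obtain rfl | rfl := eq_zero_or_eq_one c
  · simpa using hE y hy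
  · simpa using four_dvd_wt_add (hE y hy) hx (by rw [ip_comm]; exact hxE y hy)

lemma exists_ge_perp_eq_self {α : Fin n → ZMod 2} {B : Submodule (ZMod 2) (Fin n → ZMod 2)}
    (hα : α ∈ B) (hsupp : B ≤ supportedIn α) (hde : ∀ x ∈ B, 4 ∣ wt x) (h8 : 8 ∣ wt α) :
    ∃ E, B ≤ E ∧ E ≤ supportedIn α ∧ (∀ x ∈ E, 4 ∣ wt x) ∧ perp α E = E := by
  obtain ⟨E, hBE, hmax⟩ := Finite.exists_le_maximal
    (p := fun E : Submodule (ZMod 2) (Fin n → ZMod 2) => E ≤ supportedIn α ∧ ∀ x ∈ E, 4 ∣ wt x)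
    ⟨hsupp, hde⟩
  obtain ⟨hEsupp, hEde⟩ := hmax.prop
  refine ⟨E, hBE, hEsupp, hEde, by_contra fun hne => ?_⟩
  obtain ⟨x, ⟨hxα, hxE⟩, hxnE, hx⟩ :=
    exists_four_dvd_wt_mem_perp_of_ne (hBE hα) hEsupp hEde h8 hne
  have hsup : E ⊔ Submodule.span (ZMod 2) {x} ≤ E := hmax.le_of_ge
    ⟨sup_le hEsupp (Submodule.span_singleton_le_iff_mem _ _ |>.mpr hxα),
      four_dvd_wt_of_mem_sup_span hEde hx hxE⟩ le_sup_left
  exact hxnE (hsup (Submodule.mem_sup_right (Submodule.mem_span_singleton_self x)))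

lemma codeSupp_eq_supp {α : Fin n → ZMod 2} {E : Submodule (ZMod 2) (Fin n → ZMod 2)}
    (hα : α ∈ E) (hE : E ≤ supportedIn α) : codeSupp (E : Set (Fin n → ZMod 2)) = supp α :=
  subset_antisymm (Set.iUnion₂_subset fun _ hx => mem_supportedIn.mp (hE hx))
    (Set.subset_biUnion_of_mem (u := supp) hα)

theorem exists_doublyEven_selfDualWrt {D : Submodule (ZMod 2) (Fin n → ZMod 2)}
    (hD : ∀ x ∈ D, 8 ∣ wt x) {α : Fin n → ZMod 2} (hα : α ∈ D) :
    ∃ E : Submodule (ZMod 2) (Fin n → ZMod 2),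
      (E : Set (Fin n → ZMod 2)) ⊆ {γ ∈ dualCode (D : Set (Fin n → ZMod 2)) | supp γ ⊆ supp α} ∧
      (∀ x ∈ E, 4 ∣ wt x) ∧ selfDualWrt α (E : Set (Fin n → ZMod 2)) := by
  set B := D.map (LinearMap.mulLeft (ZMod 2) α)
  have hαB : α ∈ B := ⟨α, hα, mul_eq_right_of_supp_subset subset_rfl⟩
  have hBsupp : B ≤ supportedIn α := by
    rintro _ ⟨y, -, rfl⟩
    exact mem_supportedIn.mpr (supp_mul_subset_left α y)
  have hBde : ∀ x ∈ B, 4 ∣ wt x := by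
    rintro _ ⟨y, hy, rfl⟩
    exact four_dvd_wt_mul_of_eight_dvd (hD α hα) (hD y hy) (hD _ (D.add_mem hα hy))
  obtain ⟨E, hBE, hEsupp, hEde, hEperp⟩ := exists_ge_perp_eq_self hαB hBsupp hBde (hD α hα)
  refine ⟨E, fun x hx => ⟨fun y hy => ?_, mem_supportedIn.mp (hEsupp hx)⟩, hEde,
    codeSupp_eq_supp (hBE hαB) hEsupp, by rw [← coe_perp, hEperp]⟩
  rw [← ip_mul_right_of_supp_subset (mem_supportedIn.mp (hEsupp hx))]
  exact (hEperp.symm ▸ hx : x ∈ perp α E).2 _ (hBE ⟨y, hy, rfl⟩)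

end BinaryCode

open BinaryCode in
theorem stmt6_general {n : ℕ} (D : Submodule (ZMod 2) (Fin n → ZMod 2))
    (hte : ∀ x ∈ D, 8 ∣ wt x)
    (hone : (fun _ => (1 : ZMod 2) : Fin n → ZMod 2) ∈ D) :
    (∀ γ ∈ dualCode (D : Set (Fin n → ZMod 2)), 2 ∣ wt γ) ∧
    (∀ γ ∈ dualCode (dualCode (D : Set (Fin n → ZMod 2))), 8 ∣ wt γ) ∧
    dualCode (dualCode (D : Set (Fin n → ZMod 2))) ⊆ dualCode (D : Set (Fin n → ZMod 2)) ∧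
    (∀ α ∈ dualCode (dualCode (D : Set (Fin n → ZMod 2))),
      ∃ E : Submodule (ZMod 2) (Fin n → ZMod 2),
        (E : Set (Fin n → ZMod 2)) ⊆
          {γ ∈ dualCode (D : Set (Fin n → ZMod 2)) | supp γ ⊆ supp α} ∧
        (∀ x ∈ E, 4 ∣ wt x) ∧ selfDualWrt α (E : Set (Fin n → ZMod 2))) := by
  have hDD := dualCode_dualCode_subset D
  have hD : (D : Set (Fin n → ZMod 2)) ⊆ dualCode D :=
    subset_dualCode_of_four_dvd fun x hx => (show 4 ∣ 8 by norm_num).trans (hte x hx)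
  exact ⟨fun γ => two_dvd_wt_of_mem_dualCode hone, fun γ hγ => hte γ (hDD hγ),
    fun γ hγ => hD (hDD hγ), fun α hα => exists_doublyEven_selfDualWrt hte (hDD hα)⟩

theorem stmt6 {n : ℕ} (h16 : 16 ∣ n) (D : Submodule (ZMod 2) (Fin n → ZMod 2))
    (hte : ∀ x ∈ D, 8 ∣ wt x)
    (hone : (fun _ => (1 : ZMod 2) : Fin n → ZMod 2) ∈ D) :
    (∀ γ ∈ dualCode (D : Set (Fin n → ZMod 2)), 2 ∣ wt γ) ∧
    (∀ γ ∈ dualCode (dualCode (D : Set (Fin n → ZMod 2))), 8 ∣ wt γ) ∧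
    dualCode (dualCode (D : Set (Fin n → ZMod 2))) ⊆ dualCode (D : Set (Fin n → ZMod 2)) ∧
    (∀ α ∈ dualCode (dualCode (D : Set (Fin n → ZMod 2))),
      ∃ E : Submodule (ZMod 2) (Fin n → ZMod 2),
        (E : Set (Fin n → ZMod 2)) ⊆
          {γ ∈ dualCode (D : Set (Fin n → ZMod 2)) | supp γ ⊆ supp α} ∧
        (∀ x ∈ E, 4 ∣ wt x) ∧ selfDualWrt α (E : Set (Fin n → ZMod 2))) :=
  stmt6_general D hte hone
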